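/- For every integer n ≥ 1, every real x > 0, all reals ε, ε_s with 0 < ε ≤ ε_s, and every real λ with −1 ≤ λ ≤ 1, the quadratic f_n satisfies f_n(λ) > 0. -/

import Mathlib

open Real Finset

/-- Modified spherical Bessel function of the second kind `k_n`, explicit closed form. -/
noncomputable def kBes (n : ℕ) (x : ℝ) : ℝ :=
  (Real.exp (-x) / x) *
    ∑ l ∈ Finset.range (n + 1),
      (Nat.factorial (n + l) : ℝ) /
        ((Nat.factorial l : ℝ) * (Nat.factorial (n - l) : ℝ) * (2 * x) ^ l)

/-- Modified spherical Bessel function of the first kind `i_n`, explicit closed form. -/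
noncomputable def iBes (n : ℕ) (x : ℝ) : ℝ :=
  (1 / (2 * x)) *
    (Real.exp x *
        ∑ l ∈ Finset.range (n + 1),
          (-1 : ℝ) ^ l * (Nat.factorial (n + l) : ℝ) /
            ((Nat.factorial l : ℝ) * (Nat.factorial (n - l) : ℝ) * (2 * x) ^ l)
      + (-1 : ℝ) ^ (n + 1) * Real.exp (-x) *
        ∑ l ∈ Finset.range (n + 1),
          (Nat.factorial (n + l) : ℝ) /
            ((Nat.factorial l : ℝ) * (Nat.factorial (n - l) : ℝ) * (2 * x) ^ l))

/-- The quadratic `f_n(λ)` from the spectral-radius proof. -/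
noncomputable def fquad (n : ℕ) (x eps epss lam : ℝ) : ℝ :=
  let A : ℝ := (n : ℝ) * (eps - epss) * iBes n x - x * epss * iBes (n + 1) x
  let B : ℝ := (n : ℝ) * (eps - epss) * kBes n x + x * epss * kBes (n + 1) x
  let C : ℝ := (n : ℝ) * iBes n x + x * iBes (n + 1) x
  let D : ℝ := (n : ℝ) * kBes n x - x * kBes (n + 1) x
  let F : ℝ := 2 * (n : ℝ) / x + iBes (n + 1) x / iBes n x - kBes (n + 1) x / kBes n x
  A ^ 2 * D * kBes n x * lam ^ 2 - A * B * x * iBes n x * kBes n x * F * lam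
    + B ^ 2 * C * iBes n x

/-!
`k_n = e^{-x}/x · y_n(1/x)` and `i_n` are built from the Bessel polynomials `y_n`, so both satisfy
the three-term recurrence `u_{n+2} = u_n ± (2n+3)/x · u_{n+1}`. Along any such recurrence the Turán
expression `u_n u_{n+2} - u_{n+1}²` increases in steps of two. This gives `k_{n+1}² ≤ k_n k_{n+2}`
from the first two values, and `i_n i_{n+2} ≤ i_{n+1}²` because `i_n → 0`, which is read off the
power series of `i_n` (the series also shows `i_n > 0`). Through the recurrences, the two Turán
inequalities put `x k_{n+1}/k_n` above and `x i_{n+1}/i_n + 2n` below the positive root of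
`z² - (2n+1) z - x²`, that is `2n i_n k_n < x (i_n k_{n+1} - i_{n+1} k_n)`. Hence `f_n` is a concave
quadratic (its leading coefficient has the sign of `n k_n - x k_{n+1} < 0`) whose values at `λ = ±1`
factor into positive terms.
-/

open Filter Topology
open scoped Nat

def IsBesselRecurrence (c : ℝ) (u : ℕ → ℝ) : Prop :=
  ∀ n : ℕ, u (n + 2) = u n + c * (2 * n + 3) * u (n + 1)

namespace IsBesselRecurrence

variable {c : ℝ} {u v : ℕ → ℝ}

theorem add (hu : IsBesselRecurrence c u) (hv : IsBesselRecurrence c v) :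
    IsBesselRecurrence c (u + v) := fun n => by
  simp only [Pi.add_apply, hu n, hv n]; ring

theorem const_mul (hu : IsBesselRecurrence c u) (a : ℝ) :
    IsBesselRecurrence c (fun n => a * u n) := fun n => by
  simp only [hu n]; ring

theorem neg_one_pow_mul (hu : IsBesselRecurrence c u) :
    IsBesselRecurrence (-c) (fun n => (-1) ^ n * u n) := fun n => by
  simp only [hu n, pow_succ]; ring

theorem ext (hu : IsBesselRecurrence c u) (hv : IsBesselRecurrence c v)
    (h₀ : u 0 = v 0) (h₁ : u 1 = v 1) : u = v := by
  funext n
  induction n using Nat.twoStepInduction with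
  | zero => exact h₀
  | one => exact h₁
  | more n ih ih' => rw [hu n, hv n, ih, ih']

theorem turan_le_add_two (hu : IsBesselRecurrence c u) (n : ℕ) :
    u n * u (n + 2) - u (n + 1) ^ 2 ≤ u (n + 2) * u (n + 4) - u (n + 3) ^ 2 := by
  have h : u (n + 2) * u (n + 4) - u (n + 3) ^ 2
      = u n * u (n + 2) - u (n + 1) ^ 2 + 2 * c ^ 2 * (2 * n + 5) * u (n + 2) ^ 2 := by
    have h₄ := hu (n + 2)
    have h₃ := hu (n + 1)
    push_cast at h₄ h₃
    linear_combination u (n + 2) * h₄ + (2 * c * u (n + 2) - u (n + 3) - u (n + 1)) * h₃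
      + u (n + 2) * hu n
  rw [h]
  have : 0 ≤ 2 * c ^ 2 * (2 * n + 5) * u (n + 2) ^ 2 := by positivity
  linarith

theorem sq_le_mul (hu : IsBesselRecurrence c u) (h₀ : u 1 ^ 2 ≤ u 0 * u 2)
    (h₁ : u 2 ^ 2 ≤ u 1 * u 3) (n : ℕ) : u (n + 1) ^ 2 ≤ u n * u (n + 2) := by
  induction n using Nat.twoStepInduction with
  | zero => exact h₀
  | one => exact h₁
  | more n ih _ => linarith [hu.turan_le_add_two n]

theorem mul_le_sq_of_tendsto (hu : IsBesselRecurrence c u) (hlim : Tendsto u atTop (𝓝 0))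
    (n : ℕ) : u n * u (n + 2) ≤ u (n + 1) ^ 2 := by
  set T : ℕ → ℝ := fun m => u m * u (m + 2) - u (m + 1) ^ 2
  have hT : Tendsto T atTop (𝓝 0) := by
    have h := (hlim.mul (hlim.comp (tendsto_add_atTop_nat 2))).sub
      ((hlim.comp (tendsto_add_atTop_nat 1)).pow 2)
    simpa using h
  have hmono : Monotone fun k => T (n + 2 * k) :=
    monotone_nat_of_le_succ fun k => by
      simpa [T, Nat.mul_succ, add_assoc] using hu.turan_le_add_two (n + 2 * k)
  have hlim' : Tendsto (fun k => T (n + 2 * k)) atTop (𝓝 0) :=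
    hT.comp (tendsto_atTop_mono (fun k => by simp only [id]; omega) tendsto_id)
  simpa [T] using hmono.ge_of_tendsto hlim' 0

end IsBesselRecurrence

theorem descFactorial_bessel_recurrence (n l : ℕ) :
    (n + l + 3).descFactorial (2 * l + 2) = (n + l + 1).descFactorial (2 * l + 2)
      + 2 * (2 * n + 3) * (l + 1) * (n + l + 1).descFactorial (2 * l) := by
  rw [show n + l + 3 = n + l + 2 + 1 by ring, show 2 * l + 2 = 2 * l + 1 + 1 by ring,
    Nat.succ_descFactorial_succ, Nat.succ_descFactorial_succ, Nat.descFactorial_succ,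
    Nat.descFactorial_succ]
  rcases Nat.lt_or_ge (n + 1) l with hl | hl
  · simp [Nat.descFactorial_eq_zero_iff_lt.mpr (by omega : n + l + 1 < 2 * l)]
  obtain ⟨j, hj⟩ := Nat.exists_eq_add_of_le hl
  cases j with
  | zero =>
    subst hj
    rw [show n + (n + 1) + 1 - (2 * (n + 1) + 1) = 0 by omega]
    ring
  | succ j =>
    obtain rfl : n = l + j := by omega
    rw [show l + j + l + 1 - (2 * l + 1) = j by omega, show l + j + l + 1 - 2 * l = j + 1 by omega]
    ring

noncomputable def besselCoeff (n l : ℕ) : ℝ := ((n + l).descFactorial (2 * l) : ℝ) / l !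

theorem besselCoeff_zero_right (n : ℕ) : besselCoeff n 0 = 1 := by
  simp [besselCoeff]

theorem besselCoeff_eq_zero {n l : ℕ} (h : n < l) : besselCoeff n l = 0 := by
  simp [besselCoeff, Nat.descFactorial_eq_zero_iff_lt.mpr (by omega : n + l < 2 * l)]

theorem besselCoeff_eq {n l : ℕ} (h : l ≤ n) :
    besselCoeff n l = (n + l)! / (l ! * (n - l)!) := by
  have h' := Nat.factorial_mul_descFactorial (show 2 * l ≤ n + l by omega)
  rw [show n + l - 2 * l = n - l by omega] at h'
  rw [besselCoeff, ← h']
  push_cast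
  field_simp

theorem besselCoeff_nonneg (n l : ℕ) : 0 ≤ besselCoeff n l := by
  unfold besselCoeff; positivity

theorem besselCoeff_add_two_succ (n l : ℕ) :
    besselCoeff (n + 2) (l + 1)
      = besselCoeff n (l + 1) + 2 * (2 * n + 3) * besselCoeff (n + 1) l := by
  have h := descFactorial_bessel_recurrence n l
  simp only [besselCoeff, show n + 2 + (l + 1) = n + l + 3 by ring,
    show n + (l + 1) = n + l + 1 by ring, show n + 1 + l = n + l + 1 by ring,
    show 2 * (l + 1) = 2 * l + 2 by ring, Nat.factorial_succ]
  rw [h]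
  push_cast
  field_simp

/-- The Bessel polynomial `y_n(z) = ∑ (n+l)!/(l!(n-l)!) (z/2)^l`. -/
noncomputable def besselPoly (n : ℕ) (z : ℝ) : ℝ :=
  ∑ l ∈ range (n + 1), besselCoeff n l * (z / 2) ^ l

theorem besselPoly_zero (z : ℝ) : besselPoly 0 z = 1 := by
  simp [besselPoly, besselCoeff_zero_right]

theorem besselPoly_one (z : ℝ) : besselPoly 1 z = 1 + z := by
  norm_num [besselPoly, sum_range_succ, besselCoeff, Nat.descFactorial, mul_div_cancel₀]

theorem isBesselRecurrence_besselPoly (z : ℝ) :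
    IsBesselRecurrence z (fun n => besselPoly n z) := fun n => by
  have hext : besselPoly n z = ∑ l ∈ range (n + 3), besselCoeff n l * (z / 2) ^ l := by
    simp [besselPoly, sum_range_succ, besselCoeff_eq_zero]
  simp only [besselPoly] at hext ⊢
  rw [hext, sum_range_succ' _ (n + 2), sum_range_succ' _ (n + 2), mul_sum]
  simp only [besselCoeff_add_two_succ, besselCoeff_zero_right, add_mul, sum_add_distrib]
  have hshift : ∀ i, z * (2 * n + 3) * (besselCoeff (n + 1) i * (z / 2) ^ i)
      = 2 * (2 * n + 3) * besselCoeff (n + 1) i * (z / 2) ^ (i + 1) := fun i => by ring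
  simp only [hshift]
  ring

theorem besselPoly_pos {z : ℝ} (hz : 0 ≤ z) (n : ℕ) : 0 < besselPoly n z :=
  sum_pos' (fun l _ => mul_nonneg (besselCoeff_nonneg n l) (by positivity))
    ⟨0, by simp, by simp [besselCoeff_zero_right]⟩

theorem besselPoly_sq_le {z : ℝ} (hz : 0 ≤ z) (n : ℕ) :
    besselPoly (n + 1) z ^ 2 ≤ besselPoly n z * besselPoly (n + 2) z := by
  have h := isBesselRecurrence_besselPoly z
  have h₂ : besselPoly 2 z = 1 + 3 * z * (1 + z) :=
    (h 0).trans (by simp only [zero_add, Nat.cast_zero, besselPoly_zero, besselPoly_one]; ring)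
  have h₃ : besselPoly 3 z = 1 + z + 5 * z * (1 + 3 * z * (1 + z)) :=
    (h 1).trans (by simp only [Nat.reduceAdd, Nat.cast_one, besselPoly_one, h₂]; ring)
  refine h.sq_le_mul ?_ ?_ n
  · rw [besselPoly_zero, besselPoly_one, h₂]
    nlinarith
  · rw [besselPoly_one, h₂, h₃]
    nlinarith [mul_nonneg hz hz, mul_nonneg (mul_nonneg hz hz) hz]

theorem kBes_eq (n : ℕ) (x : ℝ) : kBes n x = rexp (-x) / x * besselPoly n x⁻¹ := by
  rw [kBes, besselPoly]
  congr 1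
  refine sum_congr rfl fun l hl => ?_
  rw [besselCoeff_eq (Nat.lt_succ_iff.mp (mem_range.mp hl))]
  simp only [div_pow, inv_pow, mul_pow]
  ring

theorem iBes_eq (n : ℕ) (x : ℝ) :
    iBes n x = (2 * x)⁻¹ * (rexp x * besselPoly n (-x⁻¹)
      + (-1) ^ (n + 1) * rexp (-x) * besselPoly n x⁻¹) := by
  rw [iBes, besselPoly, besselPoly, one_div]
  congr 3 <;> refine sum_congr rfl fun l hl => ?_ <;>
    rw [besselCoeff_eq (Nat.lt_succ_iff.mp (mem_range.mp hl))]
  · rw [div_pow, neg_pow x⁻¹]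
    simp only [inv_pow, mul_pow]
    ring
  · simp only [div_pow, inv_pow, mul_pow]
    ring

theorem isBesselRecurrence_kBes (x : ℝ) : IsBesselRecurrence x⁻¹ (fun n => kBes n x) := by
  simpa only [kBes_eq] using (isBesselRecurrence_besselPoly x⁻¹).const_mul (rexp (-x) / x)

theorem isBesselRecurrence_iBes (x : ℝ) : IsBesselRecurrence (-x⁻¹) (fun n => iBes n x) := by
  have h : (fun n => iBes n x) = (fun n => (2 * x)⁻¹ * rexp x * besselPoly n (-x⁻¹))
      + fun n => -((2 * x)⁻¹ * rexp (-x)) * ((-1) ^ n * besselPoly n x⁻¹) := by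
    funext n; rw [iBes_eq]; simp only [Pi.add_apply, pow_succ]; ring
  rw [h]
  exact ((isBesselRecurrence_besselPoly _).const_mul _).add
    ((isBesselRecurrence_besselPoly _).neg_one_pow_mul.const_mul _)

theorem kBes_pos (n : ℕ) {x : ℝ} (hx : 0 < x) : 0 < kBes n x := by
  rw [kBes_eq]
  have := besselPoly_pos (inv_nonneg.mpr hx.le) n
  positivity

theorem kBes_sq_le (n : ℕ) {x : ℝ} (hx : 0 < x) :
    kBes (n + 1) x ^ 2 ≤ kBes n x * kBes (n + 2) x := by
  simp only [kBes_eq]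
  have := besselPoly_sq_le (inv_nonneg.mpr hx.le) n
  calc (rexp (-x) / x * besselPoly (n + 1) x⁻¹) ^ 2
      = (rexp (-x) / x) ^ 2 * besselPoly (n + 1) x⁻¹ ^ 2 := by ring
    _ ≤ (rexp (-x) / x) ^ 2 * (besselPoly n x⁻¹ * besselPoly (n + 2) x⁻¹) := by gcongr
    _ = _ := by ring

theorem Nat.factorial_le_doubleFactorial_two_mul_add_one (m : ℕ) : m ! ≤ (2 * m + 1)‼ := by
  induction m with
  | zero => simp
  | succ m ih =>
    rw [Nat.factorial_succ, show 2 * (m + 1) + 1 = 2 * m + 1 + 2 by ring,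
      Nat.doubleFactorial_add_two]
    exact Nat.mul_le_mul (by omega) ih

/-- The `k`-th term of the power series `i_n(x) = ∑ₖ x^(n+2k) / (2^k k! (2n+2k+1)!!)`. -/
noncomputable def iSeriesTerm (n : ℕ) (x : ℝ) (k : ℕ) : ℝ :=
  x ^ (n + 2 * k) / (2 ^ k * k ! * (2 * n + 2 * k + 1)‼)

noncomputable def iSeries (n : ℕ) (x : ℝ) : ℝ := ∑' k, iSeriesTerm n x k

section iSeries

variable {x : ℝ}

theorem iSeriesTerm_nonneg (n : ℕ) (hx : 0 ≤ x) (k : ℕ) : 0 ≤ iSeriesTerm n x k := by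
  unfold iSeriesTerm; positivity

theorem iSeriesTerm_le (n : ℕ) (hx : 0 ≤ x) (k : ℕ) :
    iSeriesTerm n x k ≤ x ^ n / n ! * ((x ^ 2) ^ k / k !) := by
  have hfact : (n ! * k ! : ℝ) ≤ 2 ^ k * k ! * (2 * n + 2 * k + 1)‼ := by
    have h₁ := Nat.factorial_le (Nat.le_add_right n k)
    have h₂ := Nat.factorial_le_doubleFactorial_two_mul_add_one (n + k)
    have h₃ : 1 ≤ 2 ^ k := Nat.one_le_two_pow
    rw [show 2 * (n + k) + 1 = 2 * n + 2 * k + 1 by ring] at h₂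
    calc (n ! * k ! : ℝ) ≤ 1 * k ! * (2 * n + 2 * k + 1)‼ := by
          rw [one_mul, mul_comm]; gcongr; exact_mod_cast h₁.trans h₂
      _ ≤ 2 ^ k * k ! * (2 * n + 2 * k + 1)‼ := by gcongr; exact_mod_cast h₃
  rw [iSeriesTerm, pow_add, pow_mul, div_mul_div_comm]
  gcongr

theorem summable_iSeriesTerm (n : ℕ) (hx : 0 ≤ x) : Summable (iSeriesTerm n x) :=
  .of_nonneg_of_le (iSeriesTerm_nonneg n hx) (iSeriesTerm_le n hx)
    ((Real.summable_pow_div_factorial _).mul_left _)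

theorem iSeries_pos (n : ℕ) (hx : 0 < x) : 0 < iSeries n x := by
  refine (summable_iSeriesTerm n hx.le).tsum_pos (iSeriesTerm_nonneg n hx.le) 0 ?_
  unfold iSeriesTerm; positivity

theorem iSeries_le (n : ℕ) (hx : 0 ≤ x) : iSeries n x ≤ x ^ n / n ! * rexp (x ^ 2) := by
  have hexp : HasSum (fun k => (x ^ 2) ^ k / k !) (rexp (x ^ 2)) := by
    rw [Real.exp_eq_exp_ℝ]; exact NormedSpace.expSeries_div_hasSum_exp _
  exact hasSum_le (iSeriesTerm_le n hx) (summable_iSeriesTerm n hx).hasSum (hexp.mul_left _)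

theorem tendsto_iSeries (hx : 0 ≤ x) : Tendsto (fun n => iSeries n x) atTop (𝓝 0) := by
  have h := (FloorSemiring.tendsto_pow_div_factorial_atTop x).mul_const (rexp (x ^ 2))
  rw [zero_mul] at h
  exact squeeze_zero (fun n => tsum_nonneg (iSeriesTerm_nonneg n hx)) (fun n => iSeries_le n hx) h

theorem isBesselRecurrence_iSeries (hx : 0 < x) :
    IsBesselRecurrence (-x⁻¹) (fun n => iSeries n x) := fun n => by
  set F : ℕ → ℝ := fun k => iSeriesTerm n x k + -x⁻¹ * (2 * n + 3) * iSeriesTerm (n + 1) x k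
  have hF : HasSum F (iSeries n x + -x⁻¹ * (2 * n + 3) * iSeries (n + 1) x) :=
    (summable_iSeriesTerm n hx.le).hasSum.add
      ((summable_iSeriesTerm (n + 1) hx.le).hasSum.mul_left _)
  have hF₀ : F 0 = 0 := by
    simp only [F, iSeriesTerm, show 2 * (n + 1) + 2 * 0 + 1 = 2 * n + 1 + 2 by ring,
      Nat.doubleFactorial_add_two]
    push_cast
    field_simp
    ring
  have hF_succ : ∀ k, F (k + 1) = iSeriesTerm (n + 2) x k := fun k => by
    simp only [F, iSeriesTerm, show 2 * (n + 1) + 2 * (k + 1) + 1 = 2 * n + 2 * k + 3 + 2 by ring,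
      show 2 * (n + 2) + 2 * k + 1 = 2 * n + 2 * k + 3 + 2 by ring,
      show 2 * n + 2 * (k + 1) + 1 = 2 * n + 2 * k + 3 by ring, Nat.doubleFactorial_add_two,
      Nat.factorial_succ]
    push_cast
    field_simp
    ring
  have h := (hasSum_nat_add_iff (f := F) 1).mpr (by simpa [hF₀] using hF)
  simp only [hF_succ] at h
  show iSeries (n + 2) x = _
  rw [iSeries, h.tsum_eq]
  ring

theorem iSeries_zero (hx : 0 ≤ x) : x * iSeries 0 x = Real.sinh x := by
  have hterm : ∀ k, x * iSeriesTerm 0 x k = x ^ (2 * k + 1) / (2 * k + 1)! := fun k => by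
    rw [iSeriesTerm, show 2 * 0 + 2 * k + 1 = 2 * k + 1 by ring,
      Nat.factorial_eq_mul_doubleFactorial, Nat.doubleFactorial_two_mul]
    push_cast
    field_simp
    ring
  have h := (summable_iSeriesTerm 0 hx).hasSum.mul_left x
  simp only [hterm] at h
  exact h.unique (Real.hasSum_sinh x)

theorem iSeries_one (hx : 0 ≤ x) :
    x ^ 2 * iSeries 1 x = x * Real.cosh x - Real.sinh x := by
  have hterm : ∀ k, x ^ 2 * iSeriesTerm 1 x k
      = x * (x ^ (2 * (k + 1)) / (2 * (k + 1))!) - x ^ (2 * (k + 1) + 1) / (2 * (k + 1) + 1)! :=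
    fun k => by
      have e₁ : ((2 * (k + 1))! : ℝ) = 2 ^ (k + 1) * (k + 1)! * (2 * k + 1)‼ := by
        rw [show 2 * (k + 1) = 2 * k + 1 + 1 by ring, Nat.factorial_eq_mul_doubleFactorial,
          show 2 * k + 1 + 1 = 2 * (k + 1) by ring, Nat.doubleFactorial_two_mul]
        push_cast; ring
      have e₂ : ((2 * (k + 1) + 1)! : ℝ) = (2 * k + 3) * (2 * (k + 1))! := by
        rw [Nat.factorial_succ]; push_cast; ring
      have e₃ : ((2 * 1 + 2 * k + 1)‼ : ℝ) = (2 * k + 3) * (2 * k + 1)‼ := by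
        rw [show 2 * 1 + 2 * k + 1 = 2 * k + 1 + 2 by ring, Nat.doubleFactorial_add_two]
        push_cast; ring
      rw [iSeriesTerm, e₂, e₁, e₃, Nat.factorial_succ]
      push_cast
      field_simp
      ring
  have h := (summable_iSeriesTerm 1 hx).hasSum.mul_left (x ^ 2)
  simp only [hterm] at h
  refine h.unique ((hasSum_nat_add_iff
    (f := fun k => x * (x ^ (2 * k) / (2 * k)!) - x ^ (2 * k + 1) / (2 * k + 1)!) 1).mpr ?_)
  simpa using ((Real.hasSum_cosh x).mul_left x).sub (Real.hasSum_sinh x)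

end iSeries

section iBes

variable {x : ℝ}

theorem iBes_eq_iSeries (hx : 0 < x) : (fun n => iBes n x) = fun n => iSeries n x := by
  refine (isBesselRecurrence_iBes x).ext (isBesselRecurrence_iSeries hx) ?_ ?_
  · apply mul_left_cancel₀ hx.ne'
    rw [iSeries_zero hx.le, Real.sinh_eq]
    simp only [iBes_eq, besselPoly_zero]
    field_simp
    ring
  · apply mul_left_cancel₀ (pow_ne_zero 2 hx.ne')
    rw [iSeries_one hx.le, Real.sinh_eq, Real.cosh_eq]
    simp only [iBes_eq, besselPoly_one]
    field_simp
    ring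

theorem iBes_pos (n : ℕ) (hx : 0 < x) : 0 < iBes n x := by
  rw [show iBes n x = iSeries n x from congrFun (iBes_eq_iSeries hx) n]
  exact iSeries_pos n hx

theorem iBes_mul_le_sq (n : ℕ) (hx : 0 < x) : iBes n x * iBes (n + 2) x ≤ iBes (n + 1) x ^ 2 :=
  (isBesselRecurrence_iBes x).mul_le_sq_of_tendsto
    (by rw [iBes_eq_iSeries hx]; exact tendsto_iSeries hx.le) n

end iBes

section KeyInequality

variable {x : ℝ}

theorem mul_kBes_add_two (n : ℕ) (hx : x ≠ 0) :
    x * kBes (n + 2) x = x * kBes n x + (2 * n + 3) * kBes (n + 1) x := by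
  rw [show kBes (n + 2) x = _ from isBesselRecurrence_kBes x n]
  field_simp

theorem mul_iBes_add_two (n : ℕ) (hx : x ≠ 0) :
    x * iBes (n + 2) x = x * iBes n x - (2 * n + 3) * iBes (n + 1) x := by
  rw [show iBes (n + 2) x = _ from isBesselRecurrence_iBes x n]
  field_simp
  ring

theorem mul_kBes_lt (n : ℕ) (hx : 0 < x) : (2 * n + 3) * kBes (n + 1) x < x * kBes (n + 2) x := by
  have := mul_pos hx (kBes_pos n hx)
  linarith [mul_kBes_add_two n hx.ne']

theorem kBes_turan_quadratic (n : ℕ) (hx : 0 < x) :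
    x ^ 2 * kBes (n + 1) x ^ 2
      ≤ x * kBes (n + 2) x * (x * kBes (n + 2) x - (2 * n + 3) * kBes (n + 1) x) := by
  have h := mul_kBes_add_two n hx.ne'
  calc x ^ 2 * kBes (n + 1) x ^ 2 ≤ x ^ 2 * (kBes n x * kBes (n + 2) x) := by
        gcongr; exact kBes_sq_le n hx
    _ = x * kBes (n + 2) x * (x * kBes (n + 2) x - (2 * n + 3) * kBes (n + 1) x) := by
        rw [show x * kBes (n + 2) x - (2 * n + 3) * kBes (n + 1) x = x * kBes n x by linarith]
        ring

theorem iBes_turan_quadratic (n : ℕ) (hx : 0 < x) :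
    (x * iBes (n + 2) x + 2 * (n + 1) * iBes (n + 1) x)
        * (x * iBes (n + 2) x + 2 * (n + 1) * iBes (n + 1) x - (2 * n + 3) * iBes (n + 1) x)
      < x ^ 2 * iBes (n + 1) x ^ 2 := by
  have h := mul_iBes_add_two n hx.ne'
  have hI := iBes_pos (n + 1) hx
  have hX := mul_pos hx (iBes_pos (n + 2) hx)
  have hturan : x * iBes n x * (x * iBes (n + 2) x) ≤ x ^ 2 * iBes (n + 1) x ^ 2 := by
    have := iBes_mul_le_sq n hx
    nlinarith [sq_nonneg x]
  rw [h] at hX hturan ⊢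
  nlinarith [mul_pos hX hI, mul_nonneg (Nat.cast_nonneg (α := ℝ) n) (sq_nonneg (iBes (n + 1) x))]

theorem lt_of_mul_sub_lt_mul_sub {u v w : ℝ} (hw : 0 ≤ w) (hwu : w ≤ u)
    (h : v * (v - w) < u * (u - w)) : v < u := by
  by_contra! hvu
  nlinarith [mul_nonneg (sub_nonneg.mpr hvu) (by linarith : 0 ≤ v + u - w)]

theorem two_mul_iBes_mul_kBes_lt (n : ℕ) (hx : 0 < x) :
    2 * (n + 1) * (iBes (n + 1) x * kBes (n + 1) x)
      < iBes (n + 1) x * (x * kBes (n + 2) x) - x * iBes (n + 2) x * kBes (n + 1) x := by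
  set I := iBes (n + 1) x
  set K := kBes (n + 1) x
  set Y := x * kBes (n + 2) x
  set Z := x * iBes (n + 2) x + 2 * (n + 1) * I
  have hI : 0 < I := iBes_pos _ hx
  have hK : 0 < K := kBes_pos _ hx
  -- `Z / I` and `Y / K` lie below and above the positive root of `z² - (2n+3) z - x²`
  have key : Z * K < Y * I := by
    refine lt_of_mul_sub_lt_mul_sub (w := (2 * n + 3) * (I * K)) (by positivity)
      (by nlinarith [mul_kBes_lt n hx]) ?_
    calc Z * K * (Z * K - (2 * n + 3) * (I * K)) = Z * (Z - (2 * n + 3) * I) * K ^ 2 := by ring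
      _ < x ^ 2 * I ^ 2 * K ^ 2 :=
        mul_lt_mul_of_pos_right (iBes_turan_quadratic n hx) (by positivity)
      _ = x ^ 2 * K ^ 2 * I ^ 2 := by ring
      _ ≤ Y * (Y - (2 * n + 3) * K) * I ^ 2 :=
        mul_le_mul_of_nonneg_right (kBes_turan_quadratic n hx) (sq_nonneg I)
      _ = Y * I * (Y * I - (2 * n + 3) * (I * K)) := by ring
  linarith

end KeyInequality

theorem quadratic_pos_of_endpoints {a b c t : ℝ} (ha : a ≤ 0) (h₁ : 0 < a - b + c)
    (h₂ : 0 < a + b + c) (ht : -1 ≤ t ∧ t ≤ 1) : 0 < a * t ^ 2 - b * t + c := by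
  obtain ⟨ht₁, ht₂⟩ := ht
  have key : a * t ^ 2 - b * t + c
      = (1 + t) / 2 * (a - b + c) + (1 - t) / 2 * (a + b + c) + a * (t ^ 2 - 1) := by ring
  have hsq : 0 ≤ a * (t ^ 2 - 1) := mul_nonneg_of_nonpos_of_nonpos ha (by nlinarith)
  rcases ht₁.lt_or_eq with ht₁ | rfl
  · nlinarith [mul_pos (by linarith : 0 < (1 + t) / 2) h₁,
      mul_nonneg (by linarith : 0 ≤ (1 - t) / 2) h₂.le]
  · linarith

/-- `fquad` in terms of `I = i_n`, `K = k_n`, `X = x i_{n+1}`, `Y = x k_{n+1}`, with the division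
in `ϝ_n` cleared: `x I K ϝ_n = 2 n I K + X K - I Y`. -/
def besselQuadratic (N eps epss I K X Y lam : ℝ) : ℝ :=
  (N * (eps - epss) * I - epss * X) ^ 2 * (N * K - Y) * K * lam ^ 2
    - (N * (eps - epss) * I - epss * X) * (N * (eps - epss) * K + epss * Y)
      * (2 * N * (I * K) + X * K - I * Y) * lam
    + (N * (eps - epss) * K + epss * Y) ^ 2 * (N * I + X) * I

theorem fquad_eq_besselQuadratic (n : ℕ) {x : ℝ} (eps epss lam : ℝ) (hx : x ≠ 0)
    (hI : iBes n x ≠ 0) (hK : kBes n x ≠ 0) :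
    fquad n x eps epss lam = besselQuadratic n eps epss (iBes n x) (kBes n x)
      (x * iBes (n + 1) x) (x * kBes (n + 1) x) lam := by
  simp only [fquad, besselQuadratic]
  field_simp

theorem besselQuadratic_pos {N eps epss I K X Y lam : ℝ} (hN : 0 < N) (heps : 0 < eps)
    (hle : eps ≤ epss) (hI : 0 < I) (hK : 0 < K) (hX : 0 < X) (hY : 0 < Y)
    (hD : N * K < Y) (hG : 2 * N * (I * K) < I * Y - X * K) (hlam : -1 ≤ lam ∧ lam ≤ 1) :
    0 < besselQuadratic N eps epss I K X Y lam := by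
  have hepss : 0 < epss := heps.trans_le hle
  set G := I * Y - X * K - 2 * N * (I * K)
  have hG' : 0 < G := by linarith
  refine quadratic_pos_of_endpoints ?_ ?_ ?_ hlam
  · exact mul_nonpos_of_nonpos_of_nonneg
      (mul_nonpos_of_nonneg_of_nonpos (sq_nonneg _) (by linarith)) hK.le
  · have : 0 < N * eps * epss * (X * K + I * Y) ^ 2 := by positivity
    linear_combination this
  · have : 0 < (epss * G + 2 * N * eps * (I * K))
        * (N * (2 * epss - eps) * G + 2 * N ^ 2 * epss * (I * K) + 2 * epss * (X * Y)) := by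
      have : 0 < 2 * epss - eps := by linarith
      positivity
    linear_combination this

/-- For every integer `n ≥ 1`, every real `x > 0`, all reals `ε, ε_s` with
`0 < ε ≤ ε_s`, and every real `λ ∈ [−1, 1]`, the quadratic `f_n` satisfies
`f_n(λ) > 0`. -/
theorem fquad_pos (n : ℕ) (hn : 1 ≤ n) (x : ℝ) (hx : 0 < x) (eps epss : ℝ)
    (heps : 0 < eps) (hle : eps ≤ epss) (lam : ℝ)
    (hlam : -1 ≤ lam ∧ lam ≤ 1) :
    0 < fquad n x eps epss lam := by
  obtain ⟨m, rfl⟩ : ∃ m, n = m + 1 := ⟨n - 1, by omega⟩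
  have hI := iBes_pos (m + 1) hx
  have hK := kBes_pos (m + 1) hx
  rw [fquad_eq_besselQuadratic _ _ _ _ hx.ne' hI.ne' hK.ne']
  refine besselQuadratic_pos (by positivity) heps hle hI hK (mul_pos hx (iBes_pos _ hx))
    (mul_pos hx (kBes_pos _ hx)) ?_ ?_ hlam
  · push_cast
    exact (mul_lt_mul_of_pos_right (by linarith) hK).trans (mul_kBes_lt m hx)
  · push_cast
    exact two_mul_iBes_mul_kBes_lt m hx
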